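/- The composition J^T_Q ∘ ∂_2 is the zero map, where ∂_2 : Q^{(n−1)(n+1)} → Q^{n(n+1)} is the block matrix built from the matrices A_k (the transpose X^T with its k-th column removed, placed block-diagonally) and the columns B_ℓ = Σ_{s=1}^{n+1}(−x_{1,s} e_s + x_{ℓ,s} e_{(ℓ−1)(n+1)+s}) for 2 ≤ ℓ ≤ n, and J^T_Q is the transpose of the Jacobian of the maximal minors of X. -/

import Mathlib

open MvPolynomial Matrix Finset

noncomputable section

/-- The generic `n × (n+1)` matrix of indeterminates. -/
def genX (k : Type) [Field k] (n : ℕ) :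
    Matrix (Fin n) (Fin (n + 1)) (MvPolynomial (Fin n × Fin (n + 1)) k) :=
  Matrix.of fun i j => MvPolynomial.X (i, j)

/-- `Fm k n r` is the maximal minor of the generic matrix obtained by deleting column `r`. -/
def Fm (k : Type) [Field k] (n : ℕ) (r : Fin (n + 1)) :
    MvPolynomial (Fin n × Fin (n + 1)) k :=
  Matrix.det (Matrix.of fun i j : Fin n => genX k n i (r.succAbove j))

/-- The transposed Jacobian matrix of the maximal minors. -/
def JQ (k : Type) [Field k] (n : ℕ) :
    Matrix (Fin (n + 1)) (Fin n × Fin (n + 1)) (MvPolynomial (Fin n × Fin (n + 1)) k) :=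
  Matrix.of fun i jk => MvPolynomial.pderiv jk (Fm k n i)

/-- Column index type for the matrix `∂₂`: for each block `k : Fin n` the `n - 1` columns of
`A_k` (indexed by the rows `c ≠ k` of `X` giving the remaining columns of `Xᵀ`), followed by
the columns `B_ℓ` for `ℓ ≠ 1` (zero-indexed: `ℓ ≠ 0`). -/
abbrev ColIdx (n : ℕ) : Type :=
  (Σ _kk : Fin n, {c : Fin n // c ≠ _kk}) ⊕ {l : Fin n // (l : ℕ) ≠ 0}

/-- The matrix `∂₂`, built block-diagonally from the `A_k` together with the columns `B_ℓ`. -/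
def d2 (k : Type) [Field k] (n : ℕ) :
    Matrix (Fin n × Fin (n + 1)) (ColIdx n) (MvPolynomial (Fin n × Fin (n + 1)) k) :=
  Matrix.of fun js cidx =>
    match js, cidx with
    | (j, s), Sum.inl ⟨kk, c⟩ => if j = kk then genX k n c.1 s else 0
    | (j, s), Sum.inr ⟨l, _⟩ =>
        (if j = l then genX k n l s else 0) - (if (j : ℕ) = 0 then genX k n j s else 0)


lemma pderiv_X_ite {σ R : Type*} [CommSemiring R] [DecidableEq σ] (d v : σ) :
    pderiv d (X v : MvPolynomial σ R) = if v = d then 1 else 0 := by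
  split
  · subst ‹v = d›; exact pderiv_X_self v
  · exact pderiv_X_of_ne ‹v ≠ d›

lemma pderiv_finset_prod {σ R : Type*} [CommRing R] {ι : Type*} [DecidableEq ι] (d : σ)
    (s : Finset ι) (f : ι → MvPolynomial σ R) :
    pderiv d (∏ i ∈ s, f i) = ∑ i ∈ s, pderiv d (f i) * ∏ j ∈ s.erase i, f j := by
  induction s using Finset.induction_on with
  | empty => simp
  | @insert a s ha ih =>
      rw [Finset.prod_insert ha, pderiv_mul, ih, Finset.sum_insert ha, Finset.erase_insert ha,
        Finset.mul_sum]
      congr 1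
      refine Finset.sum_congr rfl fun i hi => ?_
      rw [Finset.erase_insert_of_ne (by rintro rfl; exact ha hi), Finset.prod_insert
        (fun h => ha (Finset.mem_of_mem_erase h))]
      ring

def Fm' (k : Type) [Field k] (n : ℕ) (r : Fin (n + 1)) :
    MvPolynomial (Fin n × Fin (n + 1)) k :=
  Matrix.det (Matrix.of fun i j : Fin n => X (i, r.succAbove j))

lemma euler (k : Type) [Field k] (n : ℕ) (r : Fin (n+1)) (c c' : Fin n) :
    ∑ s : Fin (n+1), (X (c, s) : MvPolynomial (Fin n × Fin (n+1)) k) * pderiv (c', s) (Fm' k n r)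
      = if c' = c then Fm' k n r else 0 := by
  have key : (∑ s : Fin (n+1), (X (c, s) : MvPolynomial (Fin n × Fin (n+1)) k) *
        pderiv (c', s) (Fm' k n r))
      = ((Matrix.of fun i j : Fin n =>
            (X (i, r.succAbove j) : MvPolynomial (Fin n × Fin (n+1)) k)).updateRow c'
          (fun j => X (c, r.succAbove j))).det := by
    rw [Fm', Matrix.det_apply', Matrix.det_apply']
    simp only [map_sum, pderiv_mul, Derivation.map_intCast, zero_mul, zero_add, Finset.mul_sum,
      Matrix.of_apply]
    rw [Finset.sum_comm]
    refine Finset.sum_congr rfl fun σ _ => ?_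
    have hcore : (∑ s : Fin (n+1), (X (c, s) : MvPolynomial (Fin n × Fin (n+1)) k) *
          pderiv (c', s) (∏ i, (X (σ i, r.succAbove i) : MvPolynomial (Fin n × Fin (n+1)) k)))
        = ∏ i, ((Matrix.of fun i j : Fin n =>
              (X (i, r.succAbove j) : MvPolynomial (Fin n × Fin (n+1)) k)).updateRow c'
            (fun j => X (c, r.succAbove j))) (σ i) i := by
      have h1 : ∀ s : Fin (n+1),
          pderiv ((c', s) : Fin n × Fin (n+1))
              (∏ i, (X (σ i, r.succAbove i) : MvPolynomial (Fin n × Fin (n+1)) k))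
            = ∑ i, (if σ i = c' ∧ r.succAbove i = s then 1 else 0) *
                ∏ j ∈ Finset.univ.erase i,
                  (X (σ j, r.succAbove j) : MvPolynomial (Fin n × Fin (n+1)) k) := by
        intro s
        rw [pderiv_finset_prod]
        refine Finset.sum_congr rfl fun i _ => ?_
        simp only [pderiv_X_ite, Prod.mk.injEq]
      simp only [h1]
      simp only [Finset.mul_sum, ite_mul, one_mul, zero_mul, mul_ite, mul_zero, ite_and]
      rw [Finset.sum_comm]
      simp only [Finset.sum_ite_irrel, Finset.sum_const_zero, Finset.sum_ite_eq, Finset.mem_univ, if_true]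
      have h2 : ∀ i : Fin n, (σ i = c') ↔ (i = σ.symm c') := fun i =>
        by rw [Equiv.apply_eq_iff_eq_symm_apply]
      simp only [h2, Finset.sum_ite_eq', Finset.mem_univ, if_true]
      rw [← Finset.mul_prod_erase _ _ (Finset.mem_univ (σ.symm c'))]
      rw [Matrix.updateRow_apply, if_pos (Equiv.apply_symm_apply σ c')]
      congr 1
      refine Finset.prod_congr rfl fun j hj => ?_
      rw [Matrix.updateRow_apply, if_neg, Matrix.of_apply]
      intro h
      exact (Finset.ne_of_mem_erase hj) ((Equiv.apply_eq_iff_eq_symm_apply σ).mp h)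
    have hre : ∀ s : Fin (n+1),
        (X ((c, s) : Fin n × Fin (n+1)) : MvPolynomial (Fin n × Fin (n+1)) k) *
            ((((Equiv.Perm.sign σ : ℤ) : MvPolynomial (Fin n × Fin (n+1)) k)) *
              pderiv ((c', s) : Fin n × Fin (n+1))
                (∏ i, (X (σ i, r.succAbove i) : MvPolynomial (Fin n × Fin (n+1)) k)))
          = (((Equiv.Perm.sign σ : ℤ) : MvPolynomial (Fin n × Fin (n+1)) k)) *
            (X ((c, s)) * pderiv ((c', s))
              (∏ i, (X (σ i, r.succAbove i) : MvPolynomial (Fin n × Fin (n+1)) k))) :=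
      fun s => by ring
    simp only [hre]
    rw [← Finset.mul_sum, hcore]
  rw [key]
  by_cases h : c' = c
  · subst h
    rw [if_pos rfl]
    have : (fun j => (X (c', r.succAbove j) : MvPolynomial (Fin n × Fin (n+1)) k))
        = (Matrix.of fun i j : Fin n =>
            (X (i, r.succAbove j) : MvPolynomial (Fin n × Fin (n+1)) k)) c' := rfl
    rw [this, Matrix.updateRow_eq_self, Fm']
  · rw [if_neg h]
    refine Matrix.det_zero_of_row_eq (Ne.symm h) ?_
    funext j
    rw [Matrix.updateRow_apply, if_neg (Ne.symm h), Matrix.updateRow_self, Matrix.of_apply]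

theorem stmt10 (k : Type) [Field k] (n : ℕ) (hn : 2 ≤ n) :
    JQ k n * d2 k n = 0 := by
  haveI : NeZero n := ⟨by omega⟩
  refine Matrix.ext fun i cidx => ?_
  rw [Matrix.mul_apply, Matrix.zero_apply]
  cases cidx with
  | inl p =>
      obtain ⟨kk, c, hc⟩ := p
      rw [Fintype.sum_prod_type]
      have hsum : ∀ j : Fin n, (∑ s : Fin (n+1),
            JQ k n i (j, s) * d2 k n (j, s) (Sum.inl ⟨kk, ⟨c, hc⟩⟩))
          = if j = kk then
              (∑ s : Fin (n+1), (X ((c, s)) : MvPolynomial (Fin n × Fin (n+1)) k) *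
                pderiv ((j, s)) (Fm' k n i)) else 0 := by
        intro j
        by_cases h : j = kk
        · rw [if_pos h]
          refine Finset.sum_congr rfl fun s _ => ?_
          show pderiv ((j, s)) (Fm k n i) * (if j = kk then X ((c, s)) else 0) = _
          rw [if_pos h, mul_comm]
          rfl
        · rw [if_neg h]
          refine Finset.sum_eq_zero fun s _ => ?_
          show pderiv ((j, s)) (Fm k n i) * (if j = kk then X ((c, s)) else 0) = 0
          rw [if_neg h, mul_zero]
      simp only [hsum]
      rw [Finset.sum_ite_eq', if_pos (Finset.mem_univ kk), euler]
      exact if_neg (Ne.symm hc)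
  | inr p =>
      obtain ⟨l, hl⟩ := p
      rw [Fintype.sum_prod_type]
      have hl0 : l ≠ (0 : Fin n) := fun h => hl (by rw [h]; exact Fin.val_zero n)
      have hsum : ∀ j : Fin n, (∑ s : Fin (n+1),
            JQ k n i (j, s) * d2 k n (j, s) (Sum.inr ⟨l, hl⟩))
          = (if j = l then
              (∑ s : Fin (n+1), (X ((l, s)) : MvPolynomial (Fin n × Fin (n+1)) k) *
                pderiv ((j, s)) (Fm' k n i)) else 0)
            - (if j = (0 : Fin n) then
              (∑ s : Fin (n+1), (X (((0 : Fin n), s)) : MvPolynomial (Fin n × Fin (n+1)) k) *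
                pderiv ((j, s)) (Fm' k n i)) else 0) := by
        intro j
        have hc0 : ((j : ℕ) = 0) ↔ j = (0 : Fin n) := by
          rw [← Fin.val_zero n, Fin.val_eq_val]
        have hd : ∀ s : Fin (n+1), JQ k n i (j, s) * d2 k n (j, s) (Sum.inr ⟨l, hl⟩)
            = (if j = l then (X ((l, s)) : MvPolynomial (Fin n × Fin (n+1)) k) *
                  pderiv ((j, s)) (Fm' k n i) else 0)
              - (if j = (0 : Fin n) then (X (((0 : Fin n), s)) : MvPolynomial (Fin n × Fin (n+1)) k) *
                  pderiv ((j, s)) (Fm' k n i) else 0) := by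
          intro s
          show pderiv ((j, s)) (Fm k n i) *
              ((if j = l then X ((l, s)) else 0) - (if (j : ℕ) = 0 then X ((j, s)) else 0)) = _
          by_cases h1 : j = l <;> by_cases h2 : j = (0 : Fin n)
          · exact absurd (h1.symm.trans h2) hl0
          · subst h1
            simp only [if_pos rfl, hc0, if_neg h2, sub_zero, mul_sub, mul_zero]
            exact mul_comm _ _
          · subst h2
            simp only [if_neg h1, if_pos (Fin.val_zero n), if_pos rfl, zero_sub, mul_neg]
            exact congrArg Neg.neg (mul_comm _ _)
          · simp only [if_neg h1, if_neg (fun h => h2 (hc0.mp h)), if_neg h2, sub_zero, mul_zero]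
        rw [Finset.sum_congr rfl fun s _ => hd s, Finset.sum_sub_distrib]
        simp only [Finset.sum_ite_irrel, Finset.sum_const_zero]
      simp only [hsum]
      rw [Finset.sum_sub_distrib, Finset.sum_ite_eq', if_pos (Finset.mem_univ l),
        Finset.sum_ite_eq', if_pos (Finset.mem_univ (0 : Fin n)), euler, euler,
        if_pos rfl, if_pos rfl, sub_self]
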